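/- Let X be a normed linear space, V ⊂ X a finite dimensional subspace, x_1^*,…,x_M^* ∈ X^*, Z_* their span, and suppose the restriction map S : z^* ↦ z^*|_V from Z_* to V^* is injective with ‖S^{-1}‖ ≤ κ. Then for every f ∈ X and every κ_1 > κ there exists T(f) ∈ V with z^*(T(f)) = z^*(f) for all z^* ∈ Z_* and ‖f − T(f)‖_X ≤ (1 + κ_1) inf_{v ∈ V} ‖f − v‖_X. -/

import Mathlib

/-!
Let `v ∈ V` be a best approximation of `f` (it exists as `V` is finite dimensional) and `w = f - v`.
On the restrictions `z|_V` of the functionals `z ∈ Z`, the rule `z|_V ↦ z w` is a well defined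
linear functional of norm at most `κ ‖w‖`, by the hypothesis `‖z‖ ≤ κ ‖z|_V‖`. By Hahn–Banach it
extends to all of `V^*` with the same norm, and since `V` is reflexive it is evaluation at some
`u ∈ V` with `‖u‖ ≤ κ ‖w‖`. Then `T = v + u` interpolates `f` on `Z`, and
`‖f - T‖ ≤ ‖w‖ + ‖u‖ ≤ (1 + κ) ‖w‖`.
-/

open NormedSpace LinearMap Filter

theorem NormedSpace.inclusionInDoubleDual_surjective {𝕜 E : Type*} [NontriviallyNormedField 𝕜]
    [CompleteSpace 𝕜] [NormedAddCommGroup E] [NormedSpace 𝕜 E] [FiniteDimensional 𝕜 E] :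
    Function.Surjective (inclusionInDoubleDual 𝕜 E) := by
  intro ψ
  refine ⟨(Module.evalEquiv 𝕜 E).symm
    (ψ.toLinearMap ∘ₗ LinearMap.toContinuousLinearMap.toLinearMap), ?_⟩
  ext g
  exact Module.apply_evalEquiv_symm_apply 𝕜 E g.toLinearMap _

section

variable {E : Type*} [NormedAddCommGroup E] [NormedSpace ℝ E] [FiniteDimensional ℝ E]

theorem exists_forall_apply_eq_norm_le_of_subspace (W : Submodule ℝ (E →L[ℝ] ℝ))
    (φ : W →ₗ[ℝ] ℝ) {C : ℝ} (hC : 0 ≤ C) (hφ : ∀ g, ‖φ g‖ ≤ C * ‖g‖) :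
    ∃ u : E, (∀ g : W, (g : E →L[ℝ] ℝ) u = φ g) ∧ ‖u‖ ≤ C := by
  obtain ⟨ψ, hψ, hψ_norm⟩ := exists_extension_norm_eq W (φ.mkContinuous C hφ)
  obtain ⟨u, rfl⟩ := inclusionInDoubleDual_surjective ψ
  refine ⟨u, hψ, ?_⟩
  rw [← (inclusionInDoubleDualLi ℝ).norm_map u]
  exact hψ_norm.trans_le (mkContinuous_norm_le _ hC _)

theorem exists_forall_apply_eq_norm_le_of_norm_le {Z : Type*} [AddCommGroup Z] [Module ℝ Z]
    (T : Z →ₗ[ℝ] E →L[ℝ] ℝ) (ℓ : Z →ₗ[ℝ] ℝ) {C : ℝ} (hC : 0 ≤ C)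
    (hℓ : ∀ z, ‖ℓ z‖ ≤ C * ‖T z‖) :
    ∃ u : E, (∀ z, T z u = ℓ z) ∧ ‖u‖ ≤ C := by
  have hker : ker T ≤ ker ℓ := fun z hz => by
    simpa [mem_ker.mp hz] using hℓ z
  let φ : range T →ₗ[ℝ] ℝ := (ker T).liftQ ℓ hker ∘ₗ T.quotKerEquivRange.symm.toLinearMap
  have hφ : ∀ z, φ ⟨T z, mem_range_self T z⟩ = ℓ z := fun z => by
    simp [φ]
  have hφ_le : ∀ g, ‖φ g‖ ≤ C * ‖g‖ := by
    rintro ⟨_, z, rfl⟩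
    exact (hφ z).symm ▸ hℓ z
  obtain ⟨u, hu, hu_norm⟩ := exists_forall_apply_eq_norm_le_of_subspace (range T) φ hC hφ_le
  exact ⟨u, fun z => (hu _).trans (hφ z), hu_norm⟩

end

theorem Submodule.exists_norm_eq_iInf_of_finiteDimensional {X : Type*} [NormedAddCommGroup X]
    [NormedSpace ℝ X] (V : Submodule ℝ X) [FiniteDimensional ℝ V] (f : X) :
    ∃ v ∈ V, ‖f - v‖ = ⨅ w : V, ‖f - (w : X)‖ := by
  have hfar : ∀ᶠ w : V in cocompact V, ‖f - ((0 : V) : X)‖ ≤ ‖f - (w : X)‖ := by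
    filter_upwards [tendsto_norm_cocompact_atTop.eventually_ge_atTop (2 * ‖f‖)] with w hw
    rw [Submodule.coe_norm] at hw
    rw [ZeroMemClass.coe_zero, sub_zero, norm_sub_rev]
    linarith [norm_sub_norm_le (w : X) f]
  obtain ⟨v, hv⟩ := (continuous_const.sub continuous_subtype_val).norm.exists_forall_le' 0 hfar
  have hbdd : BddBelow (Set.range fun w : V => ‖f - (w : X)‖) :=
    ⟨0, Set.forall_mem_range.2 fun _ => norm_nonneg _⟩
  exact ⟨v, v.2, le_antisymm (le_ciInf hv) (ciInf_le hbdd v)⟩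

theorem exists_mem_forall_apply_eq_norm_le {X : Type*} [NormedAddCommGroup X] [NormedSpace ℝ X]
    (V : Submodule ℝ X) [FiniteDimensional ℝ V] (Z : Submodule ℝ (X →L[ℝ] ℝ)) {κ : ℝ} (hκ : 0 ≤ κ)
    (hS : ∀ z ∈ Z, ‖z‖ ≤ κ * ‖z.comp V.subtypeL‖) (w : X) :
    ∃ u ∈ V, (∀ z ∈ Z, z u = z w) ∧ ‖u‖ ≤ κ * ‖w‖ := by
  have hbound : ∀ z : Z, ‖(z : X →L[ℝ] ℝ) w‖ ≤ κ * ‖w‖ * ‖(z : X →L[ℝ] ℝ).comp V.subtypeL‖ :=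
    fun z => calc
      ‖(z : X →L[ℝ] ℝ) w‖ ≤ ‖(z : X →L[ℝ] ℝ)‖ * ‖w‖ := ContinuousLinearMap.le_opNorm _ _
      _ ≤ κ * ‖(z : X →L[ℝ] ℝ).comp V.subtypeL‖ * ‖w‖ := by gcongr; exact hS _ z.2
      _ = _ := by ring
  obtain ⟨u, hu, hu_norm⟩ := exists_forall_apply_eq_norm_le_of_norm_le (Z := Z)
    ((ContinuousLinearMap.precomp ℝ V.subtypeL).toLinearMap ∘ₗ Z.subtype)
    ((ContinuousLinearMap.apply ℝ ℝ w).toLinearMap ∘ₗ Z.subtype) (mul_nonneg hκ (norm_nonneg w))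
    hbound
  exact ⟨u, u.2, fun z hz => hu ⟨z, hz⟩, hu_norm⟩

theorem interpolation_with_near_best_approximation_general
    (X : Type*) [NormedAddCommGroup X] [NormedSpace ℝ X]
    (V : Submodule ℝ X) [FiniteDimensional ℝ V]
    (Z : Submodule ℝ (X →L[ℝ] ℝ))
    (κ : ℝ) (hκ : 0 ≤ κ)
    (hS : ∀ z ∈ Z, ‖z‖ ≤ κ * ‖z.comp V.subtypeL‖) :
    ∀ f : X, ∀ κ₁ : ℝ, κ < κ₁ →
      ∃ T ∈ V, (∀ z ∈ Z, z T = z f) ∧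
        ‖f - T‖ ≤ (1 + κ₁) * ⨅ v : V, ‖f - (v : X)‖ := by
  intro f κ₁ hκ₁
  obtain ⟨v, hvV, hv⟩ := V.exists_norm_eq_iInf_of_finiteDimensional f
  obtain ⟨u, huV, hu, hu_norm⟩ := exists_mem_forall_apply_eq_norm_le V Z hκ hS (f - v)
  refine ⟨v + u, V.add_mem hvV huV, fun z hz => ?_, ?_⟩
  · rw [map_add, hu z hz, map_sub, add_sub_cancel]
  · calc ‖f - (v + u)‖ = ‖(f - v) - u‖ := by rw [sub_add_eq_sub_sub]
      _ ≤ (1 + κ) * ‖f - v‖ := by linarith [norm_sub_le (f - v) u]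
      _ ≤ (1 + κ₁) * ‖f - v‖ := by gcongr
      _ = _ := by rw [hv]

theorem interpolation_with_near_best_approximation
    (X : Type*) [NormedAddCommGroup X] [NormedSpace ℝ X]
    (V : Submodule ℝ X) [FiniteDimensional ℝ V]
    (M : ℕ) (xstar : Fin M → (X →L[ℝ] ℝ))
    (Z : Submodule ℝ (X →L[ℝ] ℝ)) (hZ : Z = Submodule.span ℝ (Set.range xstar))
    (hinj : ∀ z ∈ Z, (∀ v : V, z v = 0) → z = 0)
    (κ : ℝ) (hκ : 0 ≤ κ)
    (hS : ∀ z ∈ Z, ‖z‖ ≤ κ * ‖z.comp V.subtypeL‖) :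
    ∀ f : X, ∀ κ₁ : ℝ, κ < κ₁ →
      ∃ T ∈ V, (∀ z ∈ Z, z T = z f) ∧
        ‖f - T‖ ≤ (1 + κ₁) * ⨅ v : V, ‖f - (v : X)‖ :=
  interpolation_with_near_best_approximation_general X V Z κ hκ hS
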